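/- Let T be an injective multidimensional array on [M_1] × ... × [M_O] with O ≥ 2, represented as a weakly ordered hypergraph H whose vertices are values of T, whose edges are the 1-slices (ordered by the free index), partitioned by mode. Then two values T(a) and T(b) lie in the same 1-slice of mode i if and only if the mode-j signed distance d_{p_j}(T(a), T(b)) is 0 for every j ≠ i; i.e., d_{p_j}(T(a), T(b)) = b_j − a_j for all j. -/

import Mathlib

/-!
Each step of a path moves along a single mode-`k` slice, so it changes only the `k`-th index,
from `s` to `t`; hence the mode-`j` distance of a path telescopes to the difference of the `j`-th
indices of its endpoints. By injectivity, `T a` lies in the mode-`i` slice through `c` exactly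
when `a` agrees with `c` off `i`.
-/

/-- Multi-index set of a multidimensional array of order `O` with mode sizes `M`. -/
abbrev Idx (O : ℕ) (M : Fin O → ℕ) := ∀ i, Fin (M i)

/-- The mode-`i` 1-slice of the array `T` through the multi-index `c`: the set of
values obtained by letting the `i`-th index run freely, linearly ordered by that
free index. -/
def slice1 {O : ℕ} {M : Fin O → ℕ} {V : Type} (T : Idx O M → V) (i : Fin O)
    (c : Idx O M) : Set V :=
  {v | ∃ t : Fin (M i), v = T (Function.update c i t)}

/-- A step of a path in the hypergraph whose vertices are values of the array and
whose edges are the 1-slices: a mode `i`, a base multi-index `c`, and the two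
positions `s, t` of the free index within the mode-`i` slice through `c`. -/
def ArrStep (O : ℕ) (M : Fin O → ℕ) := Σ i : Fin O, (Idx O M) × Fin (M i) × Fin (M i)

/-- Validity of a path: it starts at the given vertex and chains correctly. -/
def chainOk {O : ℕ} {M : Fin O → ℕ} {V : Type} (T : Idx O M → V) :
    V → List (ArrStep O M) → Prop
  | _, [] => True
  | v, ⟨i, c, s, t⟩ :: rest =>
      v = T (Function.update c i s) ∧ chainOk T (T (Function.update c i t)) rest

/-- The final vertex of a path. -/
def endA {O : ℕ} {M : Fin O → ℕ} {V : Type} (T : Idx O M → V) :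
    V → List (ArrStep O M) → V
  | v, [] => v
  | _, ⟨i, c, _, t⟩ :: rest => endA T (T (Function.update c i t)) rest

/-- The mode-`j` signed distance of a path: the sum of the signed index differences
over the steps taken within mode-`j` slices. -/
def distA {O : ℕ} {M : Fin O → ℕ} (j : Fin O) : List (ArrStep O M) → ℤ
  | [] => 0
  | ⟨i, _, s, t⟩ :: rest => (if i = j then (t : ℤ) - (s : ℤ) else 0) + distA j rest

open Function

section

variable {O : ℕ} {M : Fin O → ℕ} {V : Type} {T : Idx O M → V}

lemma ite_sub_eq_update_sub_update (c : Idx O M) (k j : Fin O) (s t : Fin (M k)) :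
    (if k = j then (t : ℤ) - (s : ℤ) else 0) =
      ((update c k t j : ℕ) : ℤ) - ((update c k s j : ℕ) : ℤ) := by
  by_cases hkj : k = j
  · subst hkj
    simp
  · simp [hkj, update_of_ne (Ne.symm hkj)]

lemma distA_eq_sub_of_chainOk (hinj : Injective T) (steps : List (ArrStep O M)) :
    ∀ {a b : Idx O M}, chainOk T (T a) steps → endA T (T a) steps = T b →
      ∀ j : Fin O, distA j steps = (b j : ℤ) - (a j : ℤ) := by
  induction steps with
  | nil =>
    intro a b _ hend j
    simp [distA, hinj hend]
  | cons step rest ih =>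
    obtain ⟨k, c, s, t⟩ := step
    rintro a b ⟨hstart, hrest⟩ hend j
    obtain rfl : a = update c k s := hinj hstart
    rw [distA, ih hrest hend j, ite_sub_eq_update_sub_update c k j s t]
    ring

lemma mem_slice1_iff (hinj : Injective T) {i : Fin O} {a c : Idx O M} :
    T a ∈ slice1 T i c ↔ ∀ j, j ≠ i → c j = a j := by
  constructor
  · rintro ⟨t, ht⟩
    exact (update_eq_iff.mp (hinj ht).symm).2
  · intro h
    exact ⟨a i, congrArg T (update_eq_iff.mpr ⟨rfl, h⟩).symm⟩

end

theorem same_slice_iff_zero_distance_general {O : ℕ} {M : Fin O → ℕ} {V : Type}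
    (T : Idx O M → V) (hinj : Function.Injective T) (i : Fin O) :
    (∀ (a b : Idx O M) (steps : List (ArrStep O M)),
      chainOk T (T a) steps → endA T (T a) steps = T b →
      ∀ j : Fin O, distA j steps = (b j : ℤ) - (a j : ℤ)) ∧
    (∀ a b : Idx O M,
      (∃ c : Idx O M, T a ∈ slice1 T i c ∧ T b ∈ slice1 T i c) ↔
      ∀ j : Fin O, j ≠ i → a j = b j) := by
  refine ⟨fun a b steps => distA_eq_sub_of_chainOk hinj steps, fun a b => ?_⟩
  simp only [mem_slice1_iff hinj]
  constructor
  · rintro ⟨c, hca, hcb⟩ j hj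
    rw [← hca j hj, hcb j hj]
  · intro hab
    exact ⟨a, fun _ _ => rfl, hab⟩

/-- for an injective array of order `O ≥ 2` encoded as a weakly ordered
hypergraph (vertices the values, edges the 1-slices partitioned by mode): the mode-`j`
signed distance between `T a` and `T b` is path-independent and equals `b_j − a_j`,
and two values lie in the same mode-`i` 1-slice if and only if their multi-indices
agree in every coordinate `j ≠ i` (i.e. the mode-`j` distance is `0` for all `j ≠ i`). -/
theorem same_slice_iff_zero_distance {O : ℕ} {M : Fin O → ℕ} {V : Type}
    (hO : 2 ≤ O) (T : Idx O M → V) (hinj : Function.Injective T) (i : Fin O) :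
    (∀ (a b : Idx O M) (steps : List (ArrStep O M)),
      chainOk T (T a) steps → endA T (T a) steps = T b →
      ∀ j : Fin O, distA j steps = (b j : ℤ) - (a j : ℤ)) ∧
    (∀ a b : Idx O M,
      (∃ c : Idx O M, T a ∈ slice1 T i c ∧ T b ∈ slice1 T i c) ↔
      ∀ j : Fin O, j ≠ i → a j = b j) :=
  same_slice_iff_zero_distance_general T hinj i
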